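/- Let G be a finite non-cyclic group and let m be the maximum order of an element of G. If m = |G| − λ(G) + 1, then G is isomorphic to the dihedral group of order 2m, and every maximal cyclic subgroup of G other than the unique cyclic subgroup of order m has order 2. -/

import Mathlib

/-- A subgroup is maximal cyclic if it is cyclic and not properly contained
in any cyclic subgroup. -/
def IsMaximalCyclic {G : Type*} [Group G] (H : Subgroup G) : Prop :=
  IsCyclic H ∧ ∀ K : Subgroup G, IsCyclic K → H ≤ K → H = K

/-- `lambdaCover G` is the number of maximal cyclic subgroups of `G`. -/
noncomputable def lambdaCover (G : Type*) [Group G] : ℕ :=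
  Nat.card {H : Subgroup G // IsMaximalCyclic H}

section Aux

variable {G : Type*} [Group G] [Finite G]

lemma isCyclic_zpowers (g : G) : IsCyclic (Subgroup.zpowers g) := by
  refine ⟨⟨⟨g, Subgroup.mem_zpowers g⟩, fun x => ?_⟩⟩
  obtain ⟨k, hk⟩ := Subgroup.mem_zpowers_iff.1 x.2
  exact Subgroup.mem_zpowers_iff.2 ⟨k, Subtype.ext (by simpa using hk)⟩

lemma exists_zpowers_eq {H : Subgroup G} (h : IsCyclic H) :
    ∃ g : G, Subgroup.zpowers g = H := by
  obtain ⟨⟨x, hxH⟩, hx⟩ := h.exists_generator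
  refine ⟨x, le_antisymm ((Subgroup.zpowers_le).2 hxH) fun y hy => ?_⟩
  obtain ⟨k, hk⟩ := Subgroup.mem_zpowers_iff.1 (hx ⟨y, hy⟩)
  exact Subgroup.mem_zpowers_iff.2 ⟨k, by simpa using congrArg Subtype.val hk⟩

lemma exists_maximal_cyclic_ge (K : Subgroup G) (hK : IsCyclic K) :
    ∃ H, IsMaximalCyclic H ∧ K ≤ H := by
  obtain ⟨H, hHmem, hHmax⟩ := Set.Finite.exists_maximalFor id
    {L : Subgroup G | IsCyclic L ∧ K ≤ L} (Set.toFinite _) ⟨K, hK, le_rfl⟩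
  exact ⟨H, ⟨hHmem.1, fun L hL hle => le_antisymm hle (hHmax ⟨hL, hHmem.2.trans hle⟩ hle)⟩, hHmem.2⟩

end Aux

theorem max_order_extremal_dihedral {G : Type*} [Group G] [Finite G]
    (hnc : ¬ IsCyclic G) (hlt : lambdaCover G + 1 < Nat.card G) (m : ℕ)
    (hm : IsGreatest {n | ∃ g : G, orderOf g = n} m)
    (heq : m + lambdaCover G = Nat.card G + 1) :
    Nonempty (G ≃* DihedralGroup m) ∧
    (∃! H : Subgroup G, IsCyclic H ∧ Nat.card H = m) ∧
    (∀ H : Subgroup G, IsMaximalCyclic H → Nat.card H ≠ m → Nat.card H = 2) := by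
  classical
  obtain ⟨g, hg⟩ := hm.1
  set C : Subgroup G := Subgroup.zpowers g with hC
  have hCcyc : IsCyclic C := isCyclic_zpowers g
  have hCcard : Nat.card C = m := by rw [hC, Nat.card_zpowers, hg]
  have hmle : m ≤ Nat.card G := hCcard ▸ Subgroup.card_le_card_group C
  have hm3 : 3 ≤ m := by omega
  have hord : ∀ x : G, orderOf x ≤ m := fun x => hm.2 ⟨x, rfl⟩
  have hCmax : IsMaximalCyclic C := by
    refine ⟨hCcyc, fun K hK hle => ?_⟩
    obtain ⟨k, hk⟩ := exists_zpowers_eq hK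
    have hcard : Nat.card K ≤ m := by rw [← hk, Nat.card_zpowers]; exact hord k
    exact Subgroup.eq_of_le_of_card_ge hle (hcard.trans_eq hCcard.symm)
  -- the maximal-extension function
  let M : Subgroup G → Subgroup G := fun K =>
    if h : IsCyclic K then (exists_maximal_cyclic_ge K h).choose else ⊥
  have hM : ∀ (K : Subgroup G), IsCyclic K → IsMaximalCyclic (M K) ∧ K ≤ M K := by
    intro K h
    simp only [M, dif_pos h]
    exact (exists_maximal_cyclic_ge K h).choose_spec
  -- F : complement of C → maximal cyclic subgroups other than C
  have hFne : ∀ x : G, x ∉ C → M (Subgroup.zpowers x) ≠ C := by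
    intro x hx hMeq
    exact hx (hMeq ▸ (hM _ (isCyclic_zpowers x)).2 (Subgroup.mem_zpowers x))
  let F : ((C : Set G)ᶜ : Set G) → {H : Subgroup G // IsMaximalCyclic H ∧ H ≠ C} :=
    fun x => ⟨M (Subgroup.zpowers (x : G)),
      (hM _ (isCyclic_zpowers _)).1, hFne x x.2⟩
  have hFsurj : Function.Surjective F := by
    rintro ⟨H, hHmax, hHne⟩
    obtain ⟨h, hh⟩ := exists_zpowers_eq hHmax.1
    have hhC : h ∉ C := by
      intro hmem
      exact hHne (hHmax.2 C hCcyc (hh ▸ Subgroup.zpowers_le.2 hmem))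
    refine ⟨⟨h, hhC⟩, Subtype.ext ?_⟩
    show M (Subgroup.zpowers h) = H
    rw [hh]
    exact (hHmax.2 _ (hM H hHmax.1).1.1 (hM H hHmax.1).2).symm
  -- cardinalities
  have hcard_compl : Nat.card ((C : Set G)ᶜ : Set G) = Nat.card G - m := by
    have h1 := Set.ncard_add_ncard_compl (C : Set G) (Set.toFinite _) (Set.toFinite _)
    simp only [← Nat.card_coe_set_eq] at h1 ⊢
    have h2 : Nat.card ((C : Set G) : Set G) = m := hCcard
    omega
  have hcard_target : Nat.card {H : Subgroup G // IsMaximalCyclic H ∧ H ≠ C} + 1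
      = lambdaCover G := by
    have hmem : C ∈ {H : Subgroup G | IsMaximalCyclic H} := hCmax
    have h1 := Set.ncard_diff_singleton_of_mem hmem
    have hpos : 0 < ({H : Subgroup G | IsMaximalCyclic H}).ncard :=
      (Set.ncard_pos (Set.toFinite _)).2 ⟨C, hmem⟩
    have e1 : Nat.card {H : Subgroup G // IsMaximalCyclic H ∧ H ≠ C}
        = ({H : Subgroup G | IsMaximalCyclic H} \ {C}).ncard := by
      rw [← Nat.card_coe_set_eq]
      exact Nat.card_congr (Equiv.subtypeEquivRight fun H => by
        simp [Set.mem_diff, Set.mem_singleton_iff])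
    have e2 : lambdaCover G = ({H : Subgroup G | IsMaximalCyclic H}).ncard := by
      rw [lambdaCover, ← Nat.card_coe_set_eq]
      exact Nat.card_congr (Equiv.subtypeEquivRight fun H => by simp)
    omega
  have hcard_eq : Nat.card ((C : Set G)ᶜ : Set G)
      = Nat.card {H : Subgroup G // IsMaximalCyclic H ∧ H ≠ C} := by omega
  have hFbij : Function.Bijective F :=
    (Nat.bijective_iff_surjective_and_card F).2 ⟨hFsurj, hcard_eq⟩
  -- every element outside C is an involution
  have hsq : ∀ x : G, x ∉ C → x * x = 1 := by
    intro x hx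
    have hx' : x⁻¹ ∉ C := fun h => hx ((Subgroup.inv_mem_iff C).1 h)
    have hne : F ⟨x, hx⟩ = F ⟨x⁻¹, hx'⟩ := Subtype.ext (by
      show M (Subgroup.zpowers x) = M (Subgroup.zpowers x⁻¹)
      rw [Subgroup.zpowers_inv])
    have := hFbij.1 hne
    have hxx : x = x⁻¹ := congrArg Subtype.val this
    have h2 := mul_inv_cancel x
    rwa [← hxx] at h2
  -- conjugation by outside elements inverts C
  have hinvert : ∀ x : G, x ∉ C → ∀ c ∈ C, x * c * x = c⁻¹ := by
    intro x hx c hc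
    have hxc : x * c ∉ C := fun h => hx (by
      have : (x * c) * c⁻¹ ∈ C := C.mul_mem h (C.inv_mem hc)
      simpa using this)
    have h1 : (x * c * x) * c = 1 := by rw [← hsq _ hxc]; group
    exact eq_inv_of_mul_eq_one_left h1
  -- products of two outside elements lie in C
  have hprod : ∀ x : G, x ∉ C → ∀ y : G, y ∉ C → x * y ∈ C := by
    intro x hx y hy
    by_contra hxy
    have hx1 : x⁻¹ = x := inv_eq_of_mul_eq_one_right (hsq x hx)
    have hy1 : y⁻¹ = y := inv_eq_of_mul_eq_one_right (hsq y hy)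
    have hxy1 : (x * y)⁻¹ = x * y := inv_eq_of_mul_eq_one_right (hsq _ hxy)
    have hcomm : x * y = y * x := by rw [← hxy1, mul_inv_rev, hx1, hy1]
    have h2 : (x * y) * g * (x * y) = g⁻¹ := hinvert _ hxy g (Subgroup.mem_zpowers g)
    have h3 : x * (y * g * y) * x = g⁻¹ := by
      calc x * (y * g * y) * x = x * y * g * (y * x) := by group
        _ = x * y * g * (x * y) := by rw [← hcomm]
        _ = g⁻¹ := h2
    rw [hinvert y hy g (Subgroup.mem_zpowers g),
      hinvert x hx g⁻¹ (C.inv_mem (Subgroup.mem_zpowers g)), inv_inv] at h3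
    -- h3 : g = g⁻¹
    have hgg : g ^ 2 = 1 := by rw [pow_two]; nth_rewrite 2 [h3]; exact mul_inv_cancel g
    have hdvd := Nat.le_of_dvd (by norm_num) (orderOf_dvd_of_pow_eq_one hgg)
    omega
  obtain ⟨t, ht⟩ : ∃ t : G, t ∉ C := by
    by_contra h
    push_neg at h
    exact hnc ⟨⟨g, fun x => h x⟩⟩
  have ht2 : t * t = 1 := hsq t ht
  have : NeZero m := ⟨by omega⟩
  set ψ : ZMod m → G := fun i => g ^ i.val with hψ
  have hpow : ∀ a b : ℕ, a % m = b % m → g ^ a = g ^ b := by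
    intro a b hab
    apply pow_eq_pow_iff_modEq.2
    rw [Nat.ModEq, hg]
    exact hab
  have hψadd : ∀ i j : ZMod m, ψ (i + j) = ψ i * ψ j := by
    intro i j
    show g ^ (i + j).val = g ^ i.val * g ^ j.val
    rw [ZMod.val_add, ← pow_add]
    exact hpow _ _ (Nat.mod_mod _ _)
  have hψ0 : ψ 0 = 1 := by show g ^ (0 : ZMod m).val = 1; rw [ZMod.val_zero, pow_zero]
  have hψneg : ∀ i : ZMod m, ψ (-i) = (ψ i)⁻¹ := by
    intro i
    refine eq_inv_of_mul_eq_one_left ?_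
    rw [← hψadd, neg_add_cancel, hψ0]
  have hψmem : ∀ i, ψ i ∈ C := fun i => C.pow_mem (Subgroup.mem_zpowers g) _
  have hgt : ∀ i : ZMod m, ψ i * t = t * (ψ i)⁻¹ := by
    intro i
    have e := hinvert t ht (ψ i) (hψmem i)
    calc ψ i * t = t * (t * ψ i * t) := by
          rw [← mul_assoc, ← mul_assoc, ht2, one_mul]
      _ = t * (ψ i)⁻¹ := by rw [e]
  set φ : DihedralGroup m → G := fun a => match a with
    | DihedralGroup.r i => ψ i
    | DihedralGroup.sr i => t * ψ i with hφ
  have hmul : ∀ a b, φ (a * b) = φ a * φ b := by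
    rintro (i | i) (j | j)
    · show ψ (i + j) = ψ i * ψ j
      exact hψadd i j
    · show t * ψ (j - i) = ψ i * (t * ψ j)
      rw [sub_eq_neg_add, hψadd, hψneg, ← mul_assoc (ψ i) t (ψ j), hgt]
      group
    · show t * ψ (i + j) = (t * ψ i) * ψ j
      rw [hψadd, mul_assoc]
    · show ψ (j - i) = (t * ψ i) * (t * ψ j)
      have e : (t * ψ i) * (t * ψ j) = t * (ψ i * t) * ψ j := by group
      rw [sub_eq_neg_add, hψadd, hψneg, e, hgt, ← mul_assoc t t, ht2, one_mul]
  have hgfin : IsOfFinOrder g := by rw [← orderOf_pos_iff]; omega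
  have hCpow : ∀ x ∈ C, ∃ k : ℕ, g ^ k = x := by
    intro x hx
    exact (Submonoid.mem_powers_iff x g).1 (hgfin.mem_powers_iff_mem_zpowers.2 hx)
  have hval : ∀ k : ℕ, ψ (k : ZMod m) = g ^ k := by
    intro k
    show g ^ ((k : ZMod m)).val = g ^ k
    rw [ZMod.val_natCast]
    exact hpow _ _ (Nat.mod_mod _ _)
  have hφsurj : Function.Surjective φ := by
    intro x
    by_cases hx : x ∈ C
    · obtain ⟨k, hk⟩ := hCpow x hx
      exact ⟨DihedralGroup.r k, by show ψ (k : ZMod m) = x; rw [hval, hk]⟩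
    · have htx : t * x ∈ C := hprod t ht x hx
      obtain ⟨k, hk⟩ := hCpow _ htx
      refine ⟨DihedralGroup.sr k, ?_⟩
      show t * ψ (k : ZMod m) = x
      rw [hval, hk, ← mul_assoc, ht2, one_mul]
  have hψinj : ∀ i j : ZMod m, ψ i = ψ j → i = j := by
    intro i j hij
    have h2 := pow_inj_mod.1 hij
    rw [hg, Nat.mod_eq_of_lt (ZMod.val_lt i), Nat.mod_eq_of_lt (ZMod.val_lt j)] at h2
    exact ZMod.val_injective m h2
  have hφinj : Function.Injective φ := by
    rintro (i | i) (j | j) h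
    · rw [hψinj i j h]
    · exfalso
      have h' : ψ i = t * ψ j := h
      have e : t = ψ i * (ψ j)⁻¹ := by rw [h']; group
      exact ht (e ▸ C.mul_mem (hψmem i) (C.inv_mem (hψmem j)))
    · exfalso
      have h' : t * ψ i = ψ j := h
      have e : t = ψ j * (ψ i)⁻¹ := by rw [← h']; group
      exact ht (e ▸ C.mul_mem (hψmem j) (C.inv_mem (hψmem i)))
    · have h' : t * ψ i = t * ψ j := h
      rw [hψinj i j (mul_left_cancel h')]
  have e : DihedralGroup m ≃* G := MulEquiv.ofBijective (MonoidHom.mk' φ hmul) ⟨hφinj, hφsurj⟩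
  refine ⟨⟨e.symm⟩, ?_, ?_⟩
  · refine ⟨C, ⟨hCcyc, hCcard⟩, ?_⟩
    rintro H ⟨hHcyc, hHcard⟩
    obtain ⟨h, hh⟩ := exists_zpowers_eq hHcyc
    have hordh : orderOf h = m := by rw [← hh, Nat.card_zpowers] at hHcard; exact hHcard
    have hhC : h ∈ C := by
      by_contra hhc
      have h2 : h ^ 2 = 1 := by rw [pow_two]; exact hsq h hhc
      have := Nat.le_of_dvd (by norm_num) (orderOf_dvd_of_pow_eq_one h2)
      omega
    rw [← hh]
    exact Subgroup.eq_of_le_of_card_ge (Subgroup.zpowers_le.2 hhC)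
      (by rw [hCcard, Nat.card_zpowers, hordh])
  · intro H hHmax hHne
    obtain ⟨h, hh⟩ := exists_zpowers_eq hHmax.1
    have hhC : h ∉ C := by
      intro hmem
      exact hHne (by rw [hHmax.2 C hCcyc (hh ▸ Subgroup.zpowers_le.2 hmem), hCcard])
    have h2 : h ≠ 1 := by rintro rfl; exact hhC C.one_mem
    have hdvd : orderOf h ∣ 2 :=
      orderOf_dvd_of_pow_eq_one (by rw [pow_two]; exact hsq h hhC)
    have hord2 : orderOf h = 2 := by
      rcases (Nat.dvd_prime Nat.prime_two).1 hdvd with h1 | h1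
      · exact absurd (orderOf_eq_one_iff.1 h1) h2
      · exact h1
    rw [← hh, Nat.card_zpowers, hord2]
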